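/- Let J¹_{[II]}, J²_{[II]}, J³_{[II]} be the 8×8 real matrices obtained as the coefficient matrices of β₁, β₂, β₃ in the matrix Σₓ βₓ J^x_{[II]} whose rows are: row1 = (0,0,0, 3β₁/2, -√3β₃/4, -3β₂/4, -√3β₂/4, 3β₃/4); row2 = (0,0, β₁/2, 0, -β₃/4, -3√3β₂/4, β₂/4, -3√3β₃/4); row3 = (0, -β₁/2, 0, 0, 5β₂/4, √3β₃/4, 5β₃/4, -√3β₂/4); row4 = (-3β₁/2, 0,0,0, -√3β₂/4, 3β₃/4, √3β₃/4, 3β₂/4); row5 = (√3β₃/4, β₃/4, -5β₂/4, √3β₂/4, 0, √3β₁/4, -5β₁/4, 0); row6 = (3β₂/4, 3√3β₂/4, -√3β₃/4, -3β₃/4, -√3β₁/4, 0, 0, -3β₁/4); row7 = (√3β₂/4, -β₂/4, -5β₃/4, -√3β₃/4, 5β₁/4, 0, 0, √3β₁/4); row8 = (-3β₃/4, 3√3β₃/4, √3β₂/4, -3β₂/4, 0, 3β₁/4, -√3β₁/4, 0). Then each J^x_{[II]} is antisymmetric, they satisfy the su(2) commutation relations [J¹_{[II]}, J²_{[II]}]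 = J³_{[II]} (and cyclic), the Casimir is (J¹_{[II]})² + (J²_{[II]})² + (J³_{[II]})² = -(15/4)·1₈ (the spin-3/2 representation with multiplicity two), and moreover [J^x_{[I]}, J^y_{[II]}] = 0 for all x, y ∈ {1,2,3}, where J^x_{[I]} are the coefficient matrices of α₁, α₂, α₃ in the matrix with rows (0,0,0, -α₁/2, -√3α₃/4, -α₂/4, √3α₂/4, -α₃/4), (0,0, α₁/2, 0, -α₃/4, -√3α₂/4, -α₂/4, √3α₃/4), (0, -α₁/2, 0, 0, -α₂/4, √3α₃/4, α₃/4, √3α₂/4), (α₁/2, 0,0,0, √3α₂/4, -α₃/4, √3α₃/4, α₂/4), (√3α₃/4, α₃/4, α₂/4, -√3α₂/4, 0, √3α₁/4, -α₁/4, 0), (α₂/4, √3α₂/4, -√3α₃/4, α₃/4, -√3α₁/4, 0, 0, α₁/4), (-√3α₂/4, α₂/4, -α₃/4, -√3α₃/4, α₁/4, 0, 0, √3α₁/4), (α₃/4, -√3α₃/4, -√3α₂/4, -α₂/4, 0, -α₁/4, -√3α₁/4, 0). -/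

import Mathlib

/-!
Both families are linear in their parameters, so the coefficient matrices are their values at the
unit vectors. Every claim is then an entrywise polynomial identity in `√3`, closed by ring
normalisation together with `√3 ^ 2 = 3`.
-/

noncomputable section

open Matrix

/-- The 8×8 matrix `Σₓ αₓ J^x_{[I]}` from the holonomy algebra of
`G_{2(2)}/(SU(2)×SU(2))`. -/
def JfamI (a1 a2 a3 : ℝ) : Matrix (Fin 8) (Fin 8) ℝ :=
  let s := Real.sqrt 3
  !![0, 0, 0, -a1/2, -s*a3/4, -a2/4, s*a2/4, -a3/4;
     0, 0, a1/2, 0, -a3/4, -s*a2/4, -a2/4, s*a3/4;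
     0, -a1/2, 0, 0, -a2/4, s*a3/4, a3/4, s*a2/4;
     a1/2, 0, 0, 0, s*a2/4, -a3/4, s*a3/4, a2/4;
     s*a3/4, a3/4, a2/4, -s*a2/4, 0, s*a1/4, -a1/4, 0;
     a2/4, s*a2/4, -s*a3/4, a3/4, -s*a1/4, 0, 0, a1/4;
     -s*a2/4, a2/4, -a3/4, -s*a3/4, a1/4, 0, 0, s*a1/4;
     a3/4, -s*a3/4, -s*a2/4, -a2/4, 0, -a1/4, -s*a1/4, 0]

/-- The 8×8 matrix `Σₓ βₓ J^x_{[II]}` from the holonomy algebra of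
`G_{2(2)}/(SU(2)×SU(2))`. -/
def JfamII (b1 b2 b3 : ℝ) : Matrix (Fin 8) (Fin 8) ℝ :=
  let s := Real.sqrt 3
  !![0, 0, 0, 3*b1/2, -s*b3/4, -3*b2/4, -s*b2/4, 3*b3/4;
     0, 0, b1/2, 0, -b3/4, -3*s*b2/4, b2/4, -3*s*b3/4;
     0, -b1/2, 0, 0, 5*b2/4, s*b3/4, 5*b3/4, -s*b2/4;
     -3*b1/2, 0, 0, 0, -s*b2/4, 3*b3/4, s*b3/4, 3*b2/4;
     s*b3/4, b3/4, -5*b2/4, s*b2/4, 0, s*b1/4, -5*b1/4, 0;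
     3*b2/4, 3*s*b2/4, -s*b3/4, -3*b3/4, -s*b1/4, 0, 0, -3*b1/4;
     s*b2/4, -b2/4, -5*b3/4, -s*b3/4, 5*b1/4, 0, 0, s*b1/4;
     -3*b3/4, 3*s*b3/4, s*b2/4, -3*b2/4, 0, 3*b1/4, -s*b1/4, 0]

theorem coeffs_eq_of_forall_smul_add_smul_add_smul {R M : Type*} [Semiring R] [AddCommMonoid M]
    [Module R M] {v₁ v₂ v₃ : M} {F : R → R → R → M}
    (h : ∀ a₁ a₂ a₃ : R, a₁ • v₁ + a₂ • v₂ + a₃ • v₃ = F a₁ a₂ a₃) :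
    v₁ = F 1 0 0 ∧ v₂ = F 0 1 0 ∧ v₃ = F 0 0 1 :=
  ⟨by simpa using h 1 0 0, by simpa using h 0 1 0, by simpa using h 0 0 1⟩

theorem sqrt_three_sq : √3 ^ 2 = 3 := Real.sq_sqrt (by norm_num)

theorem JfamII_transpose (b₁ b₂ b₃ : ℝ) : (JfamII b₁ b₂ b₃)ᵀ = -JfamII b₁ b₂ b₃ := by
  ext i j
  fin_cases i <;> fin_cases j <;>
    simp only [JfamII, Matrix.transpose_apply, Matrix.neg_apply, Matrix.of_apply,
      Matrix.cons_val, Fin.isValue, Fin.zero_eta, Fin.mk_one, Fin.reduceFinMk] <;> ring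

theorem JfamII_mul_sub_mul (b₁ b₂ b₃ c₁ c₂ c₃ : ℝ) :
    JfamII b₁ b₂ b₃ * JfamII c₁ c₂ c₃ - JfamII c₁ c₂ c₃ * JfamII b₁ b₂ b₃
      = JfamII (b₂ * c₃ - b₃ * c₂) (b₃ * c₁ - b₁ * c₃) (b₁ * c₂ - b₂ * c₁) := by
  ext i j
  fin_cases i <;> fin_cases j <;>
    simp only [JfamII, Matrix.sub_apply, Matrix.mul_apply, Fin.sum_univ_eight, Matrix.of_apply,
      Matrix.cons_val, Fin.isValue, Fin.zero_eta, Fin.mk_one, Fin.reduceFinMk] <;>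
    ring_nf <;> simp only [sqrt_three_sq] <;> ring

theorem JfamII_casimir :
    JfamII 1 0 0 * JfamII 1 0 0 + JfamII 0 1 0 * JfamII 0 1 0 + JfamII 0 0 1 * JfamII 0 0 1
      = -((15 / 4 : ℝ) • (1 : Matrix (Fin 8) (Fin 8) ℝ)) := by
  ext i j
  fin_cases i <;> fin_cases j <;>
    simp only [JfamII, Matrix.add_apply, Matrix.mul_apply, Fin.sum_univ_eight, Matrix.neg_apply,
      Matrix.smul_apply, Matrix.one_apply, Matrix.of_apply, Matrix.cons_val, Fin.isValue,
      Fin.zero_eta, Fin.mk_one, Fin.reduceFinMk, Fin.reduceEq, if_true, if_false] <;>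
    ring_nf <;> simp only [sqrt_three_sq] <;> norm_num

theorem JfamI_commute_JfamII (a₁ a₂ a₃ b₁ b₂ b₃ : ℝ) :
    Commute (JfamI a₁ a₂ a₃) (JfamII b₁ b₂ b₃) := by
  ext i j
  fin_cases i <;> fin_cases j <;>
    simp only [JfamI, JfamII, Matrix.mul_apply, Fin.sum_univ_eight, Matrix.of_apply,
      Matrix.cons_val, Fin.isValue, Fin.zero_eta, Fin.mk_one, Fin.reduceFinMk] <;>
    ring_nf <;> simp only [sqrt_three_sq] <;> ring

/-- the coefficient matrices `J^x_{[II]}` of `β₁, β₂, β₃` in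
`Σₓ βₓ J^x_{[II]}` are antisymmetric, satisfy the `su(2)` commutation relations,
have Casimir `-(15/4)·1₈`, and commute with the coefficient matrices `J^x_{[I]}`
of `α₁, α₂, α₃` in `Σₓ αₓ J^x_{[I]}`. -/
theorem stmt_7 (J1 J2 J3 K1 K2 K3 : Matrix (Fin 8) (Fin 8) ℝ)
    (hJ : ∀ a1 a2 a3 : ℝ, a1 • J1 + a2 • J2 + a3 • J3 = JfamI a1 a2 a3)
    (hK : ∀ b1 b2 b3 : ℝ, b1 • K1 + b2 • K2 + b3 • K3 = JfamII b1 b2 b3) :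
    (K1ᵀ = -K1 ∧ K2ᵀ = -K2 ∧ K3ᵀ = -K3) ∧
    (K1 * K2 - K2 * K1 = K3 ∧ K2 * K3 - K3 * K2 = K1 ∧ K3 * K1 - K1 * K3 = K2) ∧
    K1 * K1 + K2 * K2 + K3 * K3 = -((15/4 : ℝ) • (1 : Matrix (Fin 8) (Fin 8) ℝ)) ∧
    (∀ x y : Fin 3, ![J1, J2, J3] x * ![K1, K2, K3] y = ![K1, K2, K3] y * ![J1, J2, J3] x) := by
  obtain ⟨rfl, rfl, rfl⟩ := coeffs_eq_of_forall_smul_add_smul_add_smul hJ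
  obtain ⟨rfl, rfl, rfl⟩ := coeffs_eq_of_forall_smul_add_smul_add_smul hK
  refine ⟨⟨JfamII_transpose .., JfamII_transpose .., JfamII_transpose ..⟩,
    ⟨?_, ?_, ?_⟩, JfamII_casimir, fun x y => ?_⟩
  · simpa using JfamII_mul_sub_mul 1 0 0 0 1 0
  · simpa using JfamII_mul_sub_mul 0 1 0 0 0 1
  · simpa using JfamII_mul_sub_mul 0 0 1 1 0 0
  · fin_cases x <;> fin_cases y <;> exact (JfamI_commute_JfamII ..).eq

end
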